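/- arXiv:0804.3104 — 2 statements merged into one kernel-verified Lean document; each statement's English description precedes it below -/
import Mathlib

section
/- Let F : ℝ → ℝ be an increasing homeomorphism with F(x+1) = F(x) + 2 for all x, F(0) = 0, which is uniformly symmetric (degree d = 2). Then the dual derivative satisfies the summation condition: for every w ∈ Σ* = ∏_{q∈ℕ}{0,1}, 1/D*(F)(0⌢w) + 1/D*(F)(1⌢w) = 1, where j⌢w denotes the sequence whose first entry is j and whose (q+1)-st entry is w(q). -/
open Filter

/-- `Finv F n` is the inverse of the `n`-th iterate `F^[n]`. -/
noncomputable def Finv (F : ℝ → ℝ) (n : ℕ) : ℝ → ℝ := Function.invFun (F^[n])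

/-- Uniform symmetry of a lifted circle endomorphism. -/
def UnifSymm (F : ℝ → ℝ) : Prop :=
  ∃ ε : ℝ → ℝ, (∀ t : ℝ, 0 < t → 0 < ε t) ∧ (∃ B : ℝ, ∀ t : ℝ, 0 < t → ε t ≤ B) ∧
    Tendsto ε (nhdsWithin 0 (Set.Ioi 0)) (nhds 0) ∧
    ∀ x t : ℝ, 0 < t → ∀ n : ℕ, 1 ≤ n →
      1 / (1 + ε t) ≤ (Finv F n (x + t) - Finv F n x) / (Finv F n x - Finv F n (x - t)) ∧
      (Finv F n (x + t) - Finv F n x) / (Finv F n x - Finv F n (x - t)) ≤ 1 + ε t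

/-- `kseq d w n = Σ_{q<n} w(q) d^q`. -/
def kseq (d : ℕ) (w : ℕ → Fin d) (n : ℕ) : ℕ :=
  ∑ q ∈ Finset.range n, (w q : ℕ) * d ^ q

/-- The shift `σ*` on the dual symbolic space. -/
def shft {d : ℕ} (w : ℕ → Fin d) : ℕ → Fin d := fun q => w (q + 1)

/-- The `n`-th approximant `D*_n(F)(w)` of the dual derivative. -/
noncomputable def DstarSeq (F : ℝ → ℝ) {d : ℕ} (w : ℕ → Fin d) (n : ℕ) : ℝ :=
  (Finv F (n - 1) ((kseq d (shft w) (n - 1) : ℝ) + 1) -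
      Finv F (n - 1) (kseq d (shft w) (n - 1) : ℝ)) /
  (Finv F n ((kseq d w n : ℝ) + 1) - Finv F n (kseq d w n : ℝ))

/-- `j⌢w`: the sequence starting with the digit `j` followed by `w`. -/
def consSeq {d : ℕ} (j : Fin d) (w : ℕ → Fin d) : ℕ → Fin d :=
  fun n => Nat.casesOn n j fun q => w q

open Topology

/-!
The inverse branches `F⁻ⁿ` are uniformly quasisymmetric, so the image of `F⁻¹(1)` splits every
level-`p` interval `F⁻ᵖ[k, k + 1]` in a ratio bounded away from `0` and `1`, and these intervals
shrink geometrically. Below some scale `δ` all branches are `(1 + η)`-symmetric, and a dyadic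
induction shows that such a map distorts the ratio of three points by at most `η`. Since the
level-`(p + m)` intervals are images of level-`p` intervals (up to integer translation) under the
branch `F⁻ᵐ`, the split ratios `sₚ` form a Cauchy sequence, with limit `L ∈ (0, 1)`. Finally
`D*ₚ₊₁(0⌢w) = 1 / sₚ` and `D*ₚ₊₁(1⌢w) = 1 / (1 - sₚ)`, so the dual derivatives are `1 / L` and
`1 / (1 - L)`.
-/

def IsSymmetricUpTo (K δ : ℝ) (H : ℝ → ℝ) : Prop :=
  ∀ x t : ℝ, 0 < t → t ≤ δ →
    H (x + t) - H x ≤ K * (H x - H (x - t)) ∧ H x - H (x - t) ≤ K * (H (x + t) - H x)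

private theorem abs_add_mul_sub_half_le {E A B t η : ℝ} (hη : 0 ≤ η) (ht₀ : 0 ≤ t) (ht₁ : t ≤ 1)
    (hA : 0 ≤ A) (hBA : B ≤ (2 + η) * A) (hBA' : B ≤ (2 + η) * (B - A)) (hE : |E| ≤ η / 2 * A) :
    |E + t * (A - B / 2)| ≤ η / 2 * B := by
  rw [abs_le] at hE ⊢
  constructor <;> nlinarith [mul_nonneg ht₀ hA, mul_nonneg (sub_nonneg.2 ht₁) hA]

namespace IsSymmetricUpTo

variable {K δ : ℝ} {H : ℝ → ℝ}

theorem comp_neg (h : IsSymmetricUpTo K δ H) : IsSymmetricUpTo K δ (fun x => -H (-x)) := by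
  intro x t ht htδ
  obtain ⟨h₁, h₂⟩ := h (-x) t ht htδ
  dsimp only
  rw [show -(x + t) = -x - t by ring, show -(x - t) = -x + t by ring]
  constructor <;> linarith

theorem div_le_sub_midpoint (h : IsSymmetricUpTo K δ H) (hK : 0 ≤ K) {p q : ℝ} (hpq : p < q)
    (hδ : q - p ≤ 2 * δ) :
    (H q - H p) / (1 + K) ≤ H ((p + q) / 2) - H p ∧
      (H q - H p) / (1 + K) ≤ H q - H ((p + q) / 2) := by
  obtain ⟨h₁, h₂⟩ := h ((p + q) / 2) ((q - p) / 2) (by linarith) (by linarith)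
  rw [show (p + q) / 2 + (q - p) / 2 = q by ring, show (p + q) / 2 - (q - p) / 2 = p by ring]
    at h₁ h₂
  constructor <;> rw [div_le_iff₀ (by linarith)] <;> linarith

theorem pow_mul_sub_le_sub_left (h : IsSymmetricUpTo K δ H) (hK : 0 ≤ K) {u v : ℝ} (huv : u < v)
    (hδ : v - u ≤ 2 * δ) (N : ℕ) :
    (1 / (1 + K)) ^ N * (H v - H u) ≤ H (u + (v - u) / 2 ^ N) - H u := by
  induction N with
  | zero => simp
  | succ N ih =>
    have hlen : 0 < (v - u) / 2 ^ N := div_pos (by linarith) (by positivity)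
    have hle : (v - u) / 2 ^ N ≤ v - u := div_le_self (by linarith) (one_le_pow₀ (by norm_num))
    have hmid := (h.div_le_sub_midpoint hK (p := u) (q := u + (v - u) / 2 ^ N) (by linarith)
      (by linarith)).1
    rw [show (u + (u + (v - u) / 2 ^ N)) / 2 = u + (v - u) / 2 ^ (N + 1) by ring] at hmid
    calc (1 / (1 + K)) ^ (N + 1) * (H v - H u)
        = 1 / (1 + K) * ((1 / (1 + K)) ^ N * (H v - H u)) := by ring
      _ ≤ 1 / (1 + K) * (H (u + (v - u) / 2 ^ N) - H u) := by gcongr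
      _ ≤ H (u + (v - u) / 2 ^ (N + 1)) - H u := (one_div_mul_eq_div _ _).trans_le hmid

theorem pow_mul_sub_le_sub_right (h : IsSymmetricUpTo K δ H) (hK : 0 ≤ K) {u v : ℝ} (huv : u < v)
    (hδ : v - u ≤ 2 * δ) (N : ℕ) :
    (1 / (1 + K)) ^ N * (H v - H u) ≤ H v - H (v - (v - u) / 2 ^ N) := by
  have := h.comp_neg.pow_mul_sub_le_sub_left hK (neg_lt_neg huv) (by linarith) N
  simp only [neg_neg, sub_neg_eq_add, neg_add_eq_sub] at this
  convert this using 2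
  ring_nf

theorem abs_sub_dyadic_le {η : ℝ} (h : IsSymmetricUpTo (1 + η) δ H) (hH : Monotone H) (hη : 0 ≤ η)
    (N : ℕ) {u v : ℝ} (huv : u < v) (hδ : v - u ≤ 2 * δ) (j : ℕ) (hj : j ≤ 2 ^ N) :
    |H (u + j / 2 ^ N * (v - u)) - H u - j / 2 ^ N * (H v - H u)| ≤ η / 2 * (H v - H u) := by
  induction N generalizing u v j with
  | zero =>
    obtain rfl | rfl : j = 0 ∨ j = 1 := by omega
    all_goals norm_num; nlinarith [hH huv.le]
  | succ N ih =>
    -- On each half of `[u, v]` the error is the error relative to that half, inherited from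
    -- level `N`, plus a fraction of the midpoint defect `H m - (H u + H v) / 2`; the midpoint
    -- bounds make the two add up to at most `η / 2 * (H v - H u)` again.
    set m := (u + v) / 2 with hm
    have hmid := h.div_le_sub_midpoint (by linarith) huv hδ
    rw [show (1 : ℝ) + (1 + η) = 2 + η by ring] at hmid
    have h2 : (0 : ℝ) < 2 + η := by linarith
    have hBA : H v - H u ≤ (2 + η) * (H m - H u) := by
      have := hmid.1; rwa [div_le_iff₀' h2] at this
    have hBA' : H v - H u ≤ (2 + η) * (H v - H m) := by
      have := hmid.2; rwa [div_le_iff₀' h2] at this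
    have hpow : (2 : ℝ) ^ (N + 1) = 2 * 2 ^ N := by ring
    rcases le_or_gt j (2 ^ N) with hjN | hjN
    · have hE := ih (u := u) (v := m) (by rw [hm]; linarith) (by rw [hm]; linarith) j hjN
      have key := abs_add_mul_sub_half_le (t := j / 2 ^ N) hη (by positivity)
        (div_le_one_of_le₀ (by exact_mod_cast hjN) (by positivity))
        (sub_nonneg.2 (hH (by rw [hm]; linarith))) hBA (by linarith) hE
      rw [show u + j / 2 ^ (N + 1) * (v - u) = u + j / 2 ^ N * (m - u) by rw [hm, hpow]; ring]
      convert key using 2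
      rw [hpow]; ring
    · obtain ⟨i, rfl⟩ := Nat.exists_eq_add_of_le hjN.le
      have hi : i ≤ 2 ^ N := by rw [pow_succ] at hj; omega
      have hE := ih (u := m) (v := v) (by rw [hm]; linarith) (by rw [hm]; linarith) i hi
      rw [← abs_neg] at hE
      have key := abs_add_mul_sub_half_le (t := 1 - i / 2 ^ N) hη
        (sub_nonneg.2 (div_le_one_of_le₀ (by exact_mod_cast hi) (by positivity)))
        (sub_le_self _ (by positivity)) (sub_nonneg.2 (hH (by rw [hm]; linarith))) hBA'
        (by linarith) hE
      rw [← abs_neg]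
      rw [show u + ((2 ^ N + i : ℕ) : ℝ) / 2 ^ (N + 1) * (v - u) = m + i / 2 ^ N * (v - m) by
        rw [hm, hpow]; push_cast; field_simp; ring]
      convert key using 2
      rw [hpow]; push_cast; field_simp; ring

theorem abs_div_sub_div_le {η : ℝ} (h : IsSymmetricUpTo (1 + η) δ H) (hH : StrictMono H)
    (hη : 0 < η) {x₀ x₁ x₂ : ℝ} (h₀₁ : x₀ < x₁) (h₁₂ : x₁ < x₂) (hδ : x₂ - x₀ ≤ 2 * δ) :
    |(H x₁ - H x₀) / (H x₂ - H x₀) - (x₁ - x₀) / (x₂ - x₀)| ≤ η := by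
  obtain ⟨N, hN⟩ := exists_pow_lt_of_lt_one (half_pos hη) one_half_lt_one
  have hL : 0 < x₂ - x₀ := by linarith
  have hD : 0 < H x₂ - H x₀ := sub_pos.2 (hH (h₀₁.trans h₁₂))
  set r := (x₁ - x₀) / (x₂ - x₀) with hr
  have hr₁ : r < 1 := (div_lt_one hL).2 (by linarith)
  set j := ⌊r * 2 ^ N⌋₊
  have hj₁ : (j : ℝ) ≤ r * 2 ^ N := Nat.floor_le (by positivity)
  have hj₂ : r * 2 ^ N < j + 1 := Nat.lt_floor_add_one _
  have hjN : j + 1 ≤ 2 ^ N := by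
    have : (j : ℝ) < 2 ^ N := by nlinarith [pow_pos (two_pos (α := ℝ)) N]
    exact_mod_cast this
  have hq : (j : ℝ) / 2 ^ N ≤ r := by rw [div_le_iff₀ (by positivity)]; exact hj₁
  have hq' : r ≤ (j + 1) / 2 ^ N := by rw [le_div_iff₀ (by positivity)]; exact hj₂.le
  have he : ((j : ℝ) + 1) / 2 ^ N = j / 2 ^ N + (1 / 2) ^ N := by rw [one_div_pow]; ring
  have hx₁ : x₁ = x₀ + r * (x₂ - x₀) := by rw [hr]; field_simp; ring
  have hlo := (abs_le.mp (h.abs_sub_dyadic_le hH.monotone hη.le N (h₀₁.trans h₁₂) hδ j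
    (by omega))).1
  have hhi := (abs_le.mp (h.abs_sub_dyadic_le hH.monotone hη.le N (h₀₁.trans h₁₂) hδ (j + 1)
    hjN)).2
  push_cast at hhi
  have hHlo : H (x₀ + j / 2 ^ N * (x₂ - x₀)) ≤ H x₁ := hH.monotone (by rw [hx₁]; gcongr)
  have hHhi : H x₁ ≤ H (x₀ + (j + 1) / 2 ^ N * (x₂ - x₀)) := hH.monotone (by rw [hx₁]; gcongr)
  rw [he] at hhi hHhi hq'
  have hρlo : j / 2 ^ N - η / 2 ≤ (H x₁ - H x₀) / (H x₂ - H x₀) := by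
    rw [le_div_iff₀ hD]; linarith
  have hρhi : (H x₁ - H x₀) / (H x₂ - H x₀) ≤ j / 2 ^ N + (1 / 2) ^ N + η / 2 := by
    rw [div_le_iff₀ hD]; linarith
  rw [abs_le]; constructor <;> linarith

end IsSymmetricUpTo

theorem exists_pos_mul_sub_le_of_isSymmetricUpTo {K a : ℝ} (hK : 0 ≤ K) (ha₀ : 0 < a)
    (ha₁ : a < 1) :
    ∃ μ, 0 < μ ∧ μ ≤ 1 ∧ ∀ H : ℝ → ℝ, Monotone H → IsSymmetricUpTo K (1 / 2) H → ∀ y,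
      μ * (H (y + 1) - H y) ≤ H (y + a) - H y ∧ μ * (H (y + 1) - H y) ≤ H (y + 1) - H (y + a) := by
  obtain ⟨N, hN⟩ := exists_pow_lt_of_lt_one (lt_min ha₀ (sub_pos.2 ha₁)) one_half_lt_one
  rw [one_div_pow, lt_min_iff] at hN
  refine ⟨(1 / (1 + K)) ^ N, by positivity,
    pow_le_one₀ (by positivity) ((div_le_one (by linarith)).2 (by linarith)),
    fun H hH h y => ⟨?_, ?_⟩⟩
  · have := h.pow_mul_sub_le_sub_left hK (lt_add_one y) (by norm_num) N
    rw [add_sub_cancel_left] at this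
    exact this.trans (sub_le_sub_right (hH (by linarith)) _)
  · have := h.pow_mul_sub_le_sub_right hK (lt_add_one y) (by norm_num) N
    rw [add_sub_cancel_left] at this
    exact this.trans (sub_le_sub_left (hH (by linarith)) _)

section InverseBranches

variable {F : ℝ → ℝ}

theorem Finv_iterate (hbij : Function.Bijective F) (n : ℕ) (x : ℝ) : Finv F n (F^[n] x) = x :=
  Function.leftInverse_invFun (hbij.iterate n).1 x

theorem iterate_Finv (hbij : Function.Bijective F) (n : ℕ) (y : ℝ) : F^[n] (Finv F n y) = y :=
  Function.rightInverse_invFun (hbij.iterate n).2 y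

theorem Finv_eq_of_iterate_eq (hbij : Function.Bijective F) {n : ℕ} {x y : ℝ}
    (h : F^[n] x = y) : Finv F n y = x := by
  rw [← h, Finv_iterate hbij]

theorem Finv_zero_apply (y : ℝ) : Finv F 0 y = y :=
  Function.invFun_eq (f := F^[0]) ⟨y, rfl⟩

theorem strictMono_Finv (hmono : StrictMono F) (hbij : Function.Bijective F) (n : ℕ) :
    StrictMono (Finv F n) := fun a b hab => by
  rwa [← (hmono.iterate n).lt_iff_lt, iterate_Finv hbij, iterate_Finv hbij]

theorem Finv_add (hbij : Function.Bijective F) (m n : ℕ) (y : ℝ) :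
    Finv F (m + n) y = Finv F n (Finv F m y) :=
  Finv_eq_of_iterate_eq hbij (by rw [Function.iterate_add_apply, iterate_Finv hbij,
    iterate_Finv hbij])

variable (hdeg : ∀ x : ℝ, F (x + 1) = F x + 2)
include hdeg

theorem map_add_natCast (x : ℝ) (j : ℕ) : F (x + j) = F x + 2 * j := by
  induction j with
  | zero => simp
  | succ j ih => rw [Nat.cast_succ, ← add_assoc, hdeg, ih]; ring

theorem iterate_add_natCast (n : ℕ) (x : ℝ) (j : ℕ) : F^[n] (x + j) = F^[n] x + 2 ^ n * j := by
  induction n generalizing x j with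
  | zero => simp
  | succ n ih =>
    rw [Function.iterate_succ_apply, Function.iterate_succ_apply, map_add_natCast hdeg,
      show (2 : ℝ) * j = ((2 * j : ℕ) : ℝ) by push_cast; ring, ih]
    push_cast; ring

theorem Finv_add_natCast (hbij : Function.Bijective F) (n : ℕ) (y : ℝ) (j : ℕ) :
    Finv F n (y + 2 ^ n * j) = Finv F n y + j :=
  Finv_eq_of_iterate_eq hbij (by rw [iterate_add_natCast hdeg, iterate_Finv hbij])

theorem Finv_succ_add_two_mul (hbij : Function.Bijective F) (n : ℕ) (c : ℝ) (k : ℕ) :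
    Finv F (n + 1) (c + 2 * k) = Finv F n (Finv F 1 c + k) := by
  rw [add_comm n, Finv_add hbij, ← Finv_add_natCast hdeg hbij 1, pow_one]

variable (hF0 : F 0 = 0)
include hF0

omit hdeg in
theorem Finv_one_zero (hbij : Function.Bijective F) : Finv F 1 0 = 0 :=
  Finv_eq_of_iterate_eq hbij hF0

theorem Finv_one_two (hbij : Function.Bijective F) : Finv F 1 2 = 1 :=
  Finv_eq_of_iterate_eq hbij (by simpa [hF0] using hdeg 0)

theorem Finv_one_one_mem_Ioo (hmono : StrictMono F) (hbij : Function.Bijective F) :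
    Finv F 1 1 ∈ Set.Ioo 0 1 := by
  have h := strictMono_Finv hmono hbij 1
  constructor
  · simpa [Finv_one_zero hF0 hbij] using h one_pos
  · simpa [Finv_one_two hdeg hF0 hbij] using h one_lt_two

end InverseBranches

theorem kseq_succ {d : ℕ} (v : ℕ → Fin d) (n : ℕ) :
    kseq d v (n + 1) = v 0 + d * kseq d (shft v) n := by
  simp only [kseq, shft, Finset.sum_range_succ', Finset.mul_sum, pow_succ]
  rw [add_comm]; congr 1
  · simp
  · exact Finset.sum_congr rfl fun q _ => by ring

theorem kseq_add {d : ℕ} (v : ℕ → Fin d) (p m : ℕ) :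
    kseq d v (p + m) = kseq d v p + d ^ p * kseq d (fun q => v (p + q)) m := by
  simp only [kseq, Finset.sum_range_add, Finset.mul_sum, pow_add]
  exact congrArg _ (Finset.sum_congr rfl fun q _ => by ring)

theorem shft_consSeq {d : ℕ} (j : Fin d) (w : ℕ → Fin d) : shft (consSeq j w) = w := rfl

section Symmetry

variable {F : ℝ → ℝ}

theorem isSymmetricUpTo_Finv_of_ratio_le (hmono : StrictMono F) (hbij : Function.Bijective F)
    {ε : ℝ → ℝ} (hεpos : ∀ t : ℝ, 0 < t → 0 < ε t)
    (hratio : ∀ x t : ℝ, 0 < t → ∀ n : ℕ, 1 ≤ n →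
      1 / (1 + ε t) ≤ (Finv F n (x + t) - Finv F n x) / (Finv F n x - Finv F n (x - t)) ∧
      (Finv F n (x + t) - Finv F n x) / (Finv F n x - Finv F n (x - t)) ≤ 1 + ε t)
    {K δ : ℝ} (hK : ∀ t : ℝ, 0 < t → t ≤ δ → 1 + ε t ≤ K) (n : ℕ) :
    IsSymmetricUpTo K δ (Finv F n) := by
  intro x t ht htδ
  have hKt := hK t ht htδ
  have hεt := hεpos t ht
  rcases n.eq_zero_or_pos with rfl | hn
  · simp only [Finv_zero_apply]
    constructor <;> nlinarith
  obtain ⟨h₁, h₂⟩ := hratio x t ht n hn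
  have hA : 0 < Finv F n (x + t) - Finv F n x :=
    sub_pos.2 (strictMono_Finv hmono hbij n (lt_add_of_pos_right x ht))
  have hB : 0 < Finv F n x - Finv F n (x - t) :=
    sub_pos.2 (strictMono_Finv hmono hbij n (sub_lt_self x ht))
  rw [div_le_iff₀ hB] at h₂
  rw [div_le_div_iff₀ (by linarith) hB] at h₁
  constructor <;> nlinarith

theorem UnifSymm.exists_isSymmetricUpTo (hF : UnifSymm F) (hmono : StrictMono F)
    (hbij : Function.Bijective F) : ∃ K, 0 ≤ K ∧ ∀ n, IsSymmetricUpTo K (1 / 2) (Finv F n) := by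
  obtain ⟨ε, hεpos, ⟨B, hB⟩, -, hratio⟩ := hF
  refine ⟨1 + B, by linarith [hεpos 1 one_pos, hB 1 one_pos], fun n => ?_⟩
  exact isSymmetricUpTo_Finv_of_ratio_le hmono hbij hεpos hratio
    (fun t ht _ => by linarith [hB t ht]) n

theorem UnifSymm.exists_isSymmetricUpTo_one_add (hF : UnifSymm F) (hmono : StrictMono F)
    (hbij : Function.Bijective F) {η : ℝ} (hη : 0 < η) :
    ∃ δ > 0, ∀ n, IsSymmetricUpTo (1 + η) δ (Finv F n) := by
  obtain ⟨ε, hεpos, -, hlim, hratio⟩ := hF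
  obtain ⟨δ, hδ, hsub⟩ :=
    mem_nhdsGT_iff_exists_Ioo_subset.1 (hlim.eventually (eventually_le_nhds hη))
  refine ⟨δ / 2, half_pos hδ, fun n => ?_⟩
  exact isSymmetricUpTo_Finv_of_ratio_le hmono hbij hεpos hratio
    (fun t ht htδ => by linarith [show ε t ≤ η from hsub ⟨ht, by linarith [hδ.out]⟩]) n

end Symmetry

/-- `c ↦ branchPt F w p c` maps `[0, 1]` onto the level-`p` interval
`F⁻ᵖ[kₚ(w), kₚ(w) + 1]`, and `splitRatio F w p` is the relative position in it of the image of
`F⁻¹(1)`, the point splitting it into the level-`(p + 1)` intervals of `0⌢w` and `1⌢w`. -/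
noncomputable def branchPt (F : ℝ → ℝ) (w : ℕ → Fin 2) (p : ℕ) (c : ℝ) : ℝ :=
  Finv F p (kseq 2 w p + c)

noncomputable def splitRatio (F : ℝ → ℝ) (w : ℕ → Fin 2) (p : ℕ) : ℝ :=
  (branchPt F w p (Finv F 1 1) - branchPt F w p 0) / (branchPt F w p 1 - branchPt F w p 0)

def SplitBoundedBelow (F : ℝ → ℝ) (μ : ℝ) : Prop :=
  ∀ w p, μ * (branchPt F w p 1 - branchPt F w p 0) ≤
      branchPt F w p (Finv F 1 1) - branchPt F w p 0 ∧
    μ * (branchPt F w p 1 - branchPt F w p 0) ≤ branchPt F w p 1 - branchPt F w p (Finv F 1 1)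

section BranchPoints

variable {F : ℝ → ℝ} (hmono : StrictMono F) (hbij : Function.Bijective F)
  (hdeg : ∀ x : ℝ, F (x + 1) = F x + 2)

include hmono hbij in
theorem strictMono_branchPt (w : ℕ → Fin 2) (p : ℕ) : StrictMono (branchPt F w p) :=
  (strictMono_Finv hmono hbij p).comp (fun _ _ h => by simpa using h)

include hbij hdeg

theorem branchPt_succ (v : ℕ → Fin 2) (n : ℕ) (c : ℝ) :
    branchPt F v (n + 1) c = branchPt F (shft v) n (Finv F 1 (v 0 + c)) := by
  rw [branchPt, branchPt, kseq_succ, add_comm _ (Finv F 1 _), ← Finv_succ_add_two_mul hdeg hbij]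
  push_cast; ring_nf

theorem branchPt_add (w : ℕ → Fin 2) (p m : ℕ) (c : ℝ) :
    branchPt F w (p + m) c = Finv F m (branchPt F w p c + kseq 2 (fun q => w (p + q)) m) := by
  rw [branchPt, branchPt, Finv_add hbij, kseq_add, ← Finv_add_natCast hdeg hbij]
  push_cast; ring_nf

end BranchPoints

section DualDerivative

variable {F : ℝ → ℝ} (hmono : StrictMono F) (hbij : Function.Bijective F)
  (hdeg : ∀ x : ℝ, F (x + 1) = F x + 2) (hF0 : F 0 = 0)

theorem DstarSeq_succ (v : ℕ → Fin 2) (p : ℕ) :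
    DstarSeq F v (p + 1) = (branchPt F (shft v) p 1 - branchPt F (shft v) p 0) /
      (branchPt F v (p + 1) 1 - branchPt F v (p + 1) 0) := by
  simp [DstarSeq, branchPt]

include hbij hdeg hF0

theorem DstarSeq_consSeq_zero (w : ℕ → Fin 2) (p : ℕ) :
    DstarSeq F (consSeq 0 w) (p + 1) = (splitRatio F w p)⁻¹ := by
  rw [DstarSeq_succ, branchPt_succ hbij hdeg, branchPt_succ hbij hdeg, splitRatio, inv_div]
  simp [shft_consSeq, consSeq, Finv_one_zero hF0 hbij]

include hmono in
theorem DstarSeq_consSeq_one (w : ℕ → Fin 2) (p : ℕ) :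
    DstarSeq F (consSeq 1 w) (p + 1) = (1 - splitRatio F w p)⁻¹ := by
  have hPR : branchPt F w p 0 < branchPt F w p 1 := strictMono_branchPt hmono hbij w p one_pos
  rw [DstarSeq_succ, branchPt_succ hbij hdeg, branchPt_succ hbij hdeg, splitRatio,
    one_sub_div (sub_pos.2 hPR).ne', inv_div]
  simp [shft_consSeq, consSeq, Finv_one_two hdeg hF0 hbij, one_add_one_eq_two]

end DualDerivative

section Convergence

variable {F : ℝ → ℝ} (hmono : StrictMono F) (hbij : Function.Bijective F)
  (hdeg : ∀ x : ℝ, F (x + 1) = F x + 2) (hF0 : F 0 = 0)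
include hmono hbij hdeg hF0

theorem exists_splitBoundedBelow (husym : UnifSymm F) :
    ∃ μ, 0 < μ ∧ μ ≤ 1 ∧ SplitBoundedBelow F μ := by
  obtain ⟨K, hK, hsym⟩ := husym.exists_isSymmetricUpTo hmono hbij
  have ha := Finv_one_one_mem_Ioo hdeg hF0 hmono hbij
  obtain ⟨μ, hμ₀, hμ₁, hμ⟩ := exists_pos_mul_sub_le_of_isSymmetricUpTo hK ha.1 ha.2
  refine ⟨μ, hμ₀, hμ₁, fun w p => ?_⟩
  simp only [branchPt, add_zero]
  exact hμ _ (strictMono_Finv hmono hbij p).monotone (hsym p) _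

omit hmono in
theorem branchPt_one_sub_zero_le {μ : ℝ} (hμ₁ : μ ≤ 1) (hμ : SplitBoundedBelow F μ)
    (n : ℕ) (v : ℕ → Fin 2) : branchPt F v n 1 - branchPt F v n 0 ≤ (1 - μ) ^ n := by
  induction n generalizing v with
  | zero => simp [branchPt, Finv_zero_apply]
  | succ n ih =>
    rw [branchPt_succ hbij hdeg, branchPt_succ hbij hdeg, pow_succ]
    obtain ⟨h₁, h₂⟩ := hμ (shft v) n
    have := mul_le_mul_of_nonneg_right (ih (shft v)) (sub_nonneg.2 hμ₁)
    generalize v 0 = b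
    fin_cases b
    · simp only [Nat.cast_zero, zero_add, Finv_one_zero hF0 hbij]
      nlinarith
    · simp only [Nat.cast_one, add_zero, one_add_one_eq_two,
        Finv_one_two hdeg hF0 hbij]
      nlinarith

omit hdeg hF0 in
theorem splitRatio_mem_Icc {μ : ℝ} (hμ : SplitBoundedBelow F μ)
    (w : ℕ → Fin 2) (p : ℕ) : splitRatio F w p ∈ Set.Icc μ (1 - μ) := by
  have hPR := sub_pos.2 (strictMono_branchPt hmono hbij w p one_pos)
  obtain ⟨h₁, h₂⟩ := hμ w p
  rw [splitRatio, Set.mem_Icc, le_div_iff₀ hPR, div_le_iff₀ hPR]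
  constructor <;> linarith

theorem abs_splitRatio_add_sub_le {η δ : ℝ} (hη : 0 < η) (w : ℕ → Fin 2) (p m : ℕ)
    (hsym : IsSymmetricUpTo (1 + η) δ (Finv F m))
    (hlen : branchPt F w p 1 - branchPt F w p 0 ≤ 2 * δ) :
    |splitRatio F w (p + m) - splitRatio F w p| ≤ η := by
  have ha := Finv_one_one_mem_Ioo hdeg hF0 hmono hbij
  have hbP := strictMono_branchPt hmono hbij w p
  set k : ℝ := ↑(kseq 2 (fun q => w (p + q)) m)
  have := hsym.abs_div_sub_div_le (strictMono_Finv hmono hbij m) hη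
    (add_lt_add_left (hbP ha.1) k) (add_lt_add_left (hbP ha.2) k) (by simpa using hlen)
  simp only [splitRatio, branchPt_add hbij hdeg]
  simpa only [add_sub_add_right_eq_sub] using this

theorem cauchySeq_splitRatio (husym : UnifSymm F) (w : ℕ → Fin 2) :
    CauchySeq (splitRatio F w) := by
  obtain ⟨μ, hμ₀, hμ₁, hμ⟩ := exists_splitBoundedBelow hmono hbij hdeg hF0 husym
  rw [Metric.cauchySeq_iff']
  intro ε hε
  obtain ⟨δ, hδ, hsym⟩ := husym.exists_isSymmetricUpTo_one_add hmono hbij (half_pos hε)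
  obtain ⟨N, hN⟩ := exists_pow_lt_of_lt_one (by positivity : (0 : ℝ) < 2 * δ)
    (by linarith : 1 - μ < 1)
  refine ⟨N, fun n hn => ?_⟩
  obtain ⟨m, rfl⟩ := Nat.exists_eq_add_of_le hn
  rw [Real.dist_eq]
  refine (abs_splitRatio_add_sub_le hmono hbij hdeg hF0 (half_pos hε) w N m (hsym m) ?_).trans_lt
    (half_lt_self hε)
  exact (branchPt_one_sub_zero_le hbij hdeg hF0 hμ₁ hμ N w).trans hN.le

theorem exists_tendsto_splitRatio (husym : UnifSymm F) (w : ℕ → Fin 2) :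
    ∃ L, 0 < L ∧ L < 1 ∧ Tendsto (splitRatio F w) atTop (𝓝 L) := by
  obtain ⟨μ, hμ₀, -, hμ⟩ := exists_splitBoundedBelow hmono hbij hdeg hF0 husym
  obtain ⟨L, hL⟩ := cauchySeq_tendsto_of_complete (cauchySeq_splitRatio hmono hbij hdeg hF0 husym w)
  have hLμ : L ∈ Set.Icc μ (1 - μ) :=
    isClosed_Icc.mem_of_tendsto hL (Eventually.of_forall (splitRatio_mem_Icc hmono hbij hμ w))
  exact ⟨L, by linarith [hLμ.1], by linarith [hLμ.2], hL⟩

end Convergence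

/-- summation condition for the dual derivative of a uniformly
symmetric circle endomorphism of degree 2:
`1/D*(F)(0⌢w) + 1/D*(F)(1⌢w) = 1`. -/
theorem stmt_14 (F : ℝ → ℝ)
    (hmono : StrictMono F) (hbij : Function.Bijective F)
    (hdeg : ∀ x : ℝ, F (x + 1) = F x + 2) (hF0 : F 0 = 0)
    (husym : UnifSymm F) :
    ∀ w : ℕ → Fin 2, ∃ D0 D1 : ℝ,
      Tendsto (fun n => DstarSeq F (consSeq 0 w) n) atTop (nhds D0) ∧
      Tendsto (fun n => DstarSeq F (consSeq 1 w) n) atTop (nhds D1) ∧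
      1 / D0 + 1 / D1 = 1 := by
  intro w
  obtain ⟨L, hL₀, hL₁, hL⟩ := exists_tendsto_splitRatio hmono hbij hdeg hF0 husym w
  refine ⟨L⁻¹, (1 - L)⁻¹, ?_, ?_, by simp⟩
  · rw [← tendsto_add_atTop_iff_nat 1]
    simpa only [DstarSeq_consSeq_zero hbij hdeg hF0] using hL.inv₀ hL₀.ne'
  · rw [← tendsto_add_atTop_iff_nat 1]
    simpa only [DstarSeq_consSeq_one hmono hbij hdeg hF0] using
      (tendsto_const_nhds.sub hL).inv₀ (sub_ne_zero.2 hL₁.ne')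
end

section
/- Let d ≥ 2 and let F : ℝ → ℝ be an increasing homeomorphism with F(x+1) = F(x) + d for all x, F(0) = 0, which is uniformly symmetric. For n ≥ 1 define Hₙ : ℝ → ℝ by Hₙ(x) = (1/n) Σ_{k=0}^{n−1} Σ_{l=0}^{d^k−1} (F^{−k}(l+x) − F^{−k}(l)). Then {Hₙ} has a subsequence converging uniformly on ℝ to a map H, and every such subsequential limit H is an increasing homeomorphism of ℝ with H(0) = 0, H(x+1) = H(x)+1, which is symmetric, and which is the distribution function of an F-invariant measure: Σ_{i=0}^{d−1} (H(F⁻¹(x+i)) − H(F⁻¹(i))) = H(x) for all x ∈ [0,1]. -/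
open Filter

/-- A symmetric circle homeomorphism (lifted to the line). -/
def SymmHomeo (H : ℝ → ℝ) : Prop :=
  ∃ ε : ℝ → ℝ, (∀ t : ℝ, 0 < t → 0 < ε t) ∧ (∃ B : ℝ, ∀ t : ℝ, 0 < t → ε t ≤ B) ∧
    Tendsto ε (nhdsWithin 0 (Set.Ioi 0)) (nhds 0) ∧
    ∀ x t : ℝ, 0 < t →
      1 / (1 + ε t) ≤ (H (x + t) - H x) / (H x - H (x - t)) ∧
      (H (x + t) - H x) / (H x - H (x - t)) ≤ 1 + ε t

/-- The distribution function of the Cesàro average of the push-forwards of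
Lebesgue measure under the iterates of `F`. -/
noncomputable def Hseq (F : ℝ → ℝ) (d : ℕ) (n : ℕ) (x : ℝ) : ℝ :=
  (1 / (n : ℝ)) * ∑ k ∈ Finset.range n, ∑ l ∈ Finset.range (d ^ k),
    (Finv F k ((l : ℝ) + x) - Finv F k (l : ℝ))

section basic
variable {F : ℝ → ℝ} {d : ℕ}

lemma F_add_nat (hdeg : ∀ x : ℝ, F (x + 1) = F x + d) (m : ℕ) (x : ℝ) :
    F (x + m) = F x + m * d := by
  induction m with
  | zero => simp
  | succ m ih =>
    push_cast
    have : x + (m + 1 : ℝ) = (x + m) + 1 := by ring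
    rw [this, hdeg, ih]; push_cast; ring

lemma iter_add_nat (hdeg : ∀ x : ℝ, F (x + 1) = F x + d) (k m : ℕ) (x : ℝ) :
    F^[k] (x + m) = F^[k] x + m * d ^ k := by
  induction k generalizing m x with
  | zero => simp
  | succ k ih =>
    rw [Function.iterate_succ_apply, Function.iterate_succ_apply]
    have h1 : F (x + m) = F x + (m * d : ℕ) := by
      rw [F_add_nat hdeg m x]; push_cast; ring
    rw [h1]
    calc F^[k] (F x + ((m * d : ℕ):ℝ)) = F^[k] (F x) + (m*d:ℕ) * d ^ k := ih (m*d) (F x)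
    _ = F^[k] (F x) + ↑m * ↑d ^ (k + 1) := by push_cast; ring

lemma iter_zero_eq (hF0 : F 0 = 0) (k : ℕ) : F^[k] 0 = 0 := by
  induction k with
  | zero => simp
  | succ k ih => rw [Function.iterate_succ_apply, hF0, ih]

lemma Finv_leftInv (hbij : Function.Bijective F) (k : ℕ) (x : ℝ) :
    Finv F k (F^[k] x) = x :=
  Function.leftInverse_invFun (hbij.iterate k).injective x

lemma Finv_rightInv (hbij : Function.Bijective F) (k : ℕ) (y : ℝ) :
    F^[k] (Finv F k y) = y :=
  Function.rightInverse_invFun (hbij.iterate k).surjective y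

lemma Finv_strictMono (hmono : StrictMono F) (hbij : Function.Bijective F) (k : ℕ) :
    StrictMono (Finv F k) := by
  intro x y hxy
  have hm : StrictMono (F^[k]) := hmono.iterate k
  rw [← hm.lt_iff_lt, Finv_rightInv hbij, Finv_rightInv hbij]
  exact hxy

lemma Finv_mono (hmono : StrictMono F) (hbij : Function.Bijective F) (k : ℕ) :
    Monotone (Finv F k) := (Finv_strictMono hmono hbij k).monotone

lemma Finv_zero (hbij : Function.Bijective F) (hF0 : F 0 = 0) (k : ℕ) :
    Finv F k 0 = 0 := by
  conv_lhs => rw [← iter_zero_eq hF0 k]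
  exact Finv_leftInv hbij k 0

lemma Finv_add_mul (hbij : Function.Bijective F)
    (hdeg : ∀ x : ℝ, F (x + 1) = F x + d) (k m : ℕ) (x : ℝ) :
    Finv F k (x + m * d ^ k) = Finv F k x + m := by
  apply (hbij.iterate k).injective
  rw [Finv_rightInv hbij, iter_add_nat hdeg, Finv_rightInv hbij]

lemma Finv_succ (hbij : Function.Bijective F) (k : ℕ) (x : ℝ) :
    Finv F (k + 1) x = Finv F k (Finv F 1 x) := by
  apply (hbij.iterate (k+1)).injective
  rw [Finv_rightInv hbij]
  rw [Function.iterate_succ_apply']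
  have : F^[k] (Finv F k (Finv F 1 x)) = Finv F 1 x := Finv_rightInv hbij k _
  rw [this]
  have := Finv_rightInv hbij 1 x
  rw [Function.iterate_one] at this
  exact this.symm

lemma Finv_zero_eq (x : ℝ) : Finv F 0 x = x := by
  have : (F^[0]) (Finv F 0 x) = Finv F 0 x := rfl
  have h : Finv F 0 x = x := by
    unfold Finv
    have : Function.invFun (F^[0]) x = x := by
      have : F^[0] = (id : ℝ → ℝ) := by simp [Function.iterate_zero]
      rw [this]
      exact Function.leftInverse_invFun Function.injective_id x
    exact this
  exact h

end basic

noncomputable def hfun (F : ℝ → ℝ) (d : ℕ) (k : ℕ) (x : ℝ) : ℝ :=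
  ∑ l ∈ Finset.range (d ^ k), (Finv F k ((l : ℝ) + x) - Finv F k (l : ℝ))

lemma Hseq_eq (F : ℝ → ℝ) (d n : ℕ) (x : ℝ) :
    Hseq F d n x = (1 / (n : ℝ)) * ∑ k ∈ Finset.range n, hfun F d k x := rfl

section hlemmas
variable {F : ℝ → ℝ} {d : ℕ}

lemma hfun_zero (k : ℕ) : hfun F d k 0 = 0 := by
  unfold hfun; simp

lemma hfun_id (hd : 2 ≤ d) (x : ℝ) : hfun F d 0 x = x := by
  unfold hfun
  simp [Finv_zero_eq]

lemma hfun_per (hbij : Function.Bijective F) (hdeg : ∀ x : ℝ, F (x + 1) = F x + d)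
    (k : ℕ) (x : ℝ) : hfun F d k (x + 1) = hfun F d k x + 1 := by
  have tel : ∑ l ∈ Finset.range (d ^ k),
      (Finv F k (((l+1 : ℕ) : ℝ) + x) - Finv F k ((l : ℝ) + x))
      = Finv F k (((d ^ k : ℕ) : ℝ) + x) - Finv F k (((0 : ℕ) : ℝ) + x) :=
    Finset.sum_range_sub (fun l => Finv F k ((l : ℝ) + x)) (d ^ k)
  have key : hfun F d k (x + 1) - hfun F d k x = 1 := by
    unfold hfun
    rw [← Finset.sum_sub_distrib]
    have e1 : ∀ l ∈ Finset.range (d ^ k),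
        (Finv F k ((l : ℝ) + (x + 1)) - Finv F k (l : ℝ))
          - (Finv F k ((l : ℝ) + x) - Finv F k (l : ℝ))
        = Finv F k (((l+1 : ℕ) : ℝ) + x) - Finv F k ((l : ℝ) + x) := by
      intro l _
      have : ((l : ℝ) + (x + 1)) = ((l+1 : ℕ) : ℝ) + x := by push_cast; ring
      rw [this]; ring
    rw [Finset.sum_congr rfl e1, tel]
    have e2 : (((d ^ k : ℕ) : ℝ) + x) = x + 1 * (d : ℝ) ^ k := by push_cast; ring
    rw [e2]
    have := Finv_add_mul hbij hdeg k 1 x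
    push_cast at this
    rw [this]
    simp
  linarith [key]

lemma hfun_mono (hmono : StrictMono F) (hbij : Function.Bijective F) (k : ℕ) :
    Monotone (hfun F d k) := by
  intro x y hxy
  unfold hfun
  apply Finset.sum_le_sum
  intro l _
  have := Finv_mono hmono hbij k (by linarith : (l : ℝ) + x ≤ (l : ℝ) + y)
  linarith

lemma hfun_mem (hmono : StrictMono F) (hbij : Function.Bijective F)
    (hdeg : ∀ x : ℝ, F (x + 1) = F x + d) (k : ℕ) {x : ℝ}
    (hx : x ∈ Set.Icc (0:ℝ) 1) : hfun F d k x ∈ Set.Icc (0:ℝ) 1 := by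
  obtain ⟨h0, h1⟩ := hx
  constructor
  · have := hfun_mono hmono hbij (d := d) k h0
    rwa [hfun_zero] at this
  · have := hfun_mono hmono hbij (d := d) k h1
    have e : hfun F d k 1 = 1 := by
      have := hfun_per hbij hdeg k 0
      rw [zero_add, hfun_zero] at this
      rw [this]; norm_num
    linarith
end hlemmas

section adj
variable {F : ℝ → ℝ} {d : ℕ} {ε : ℝ → ℝ}

lemma Finv_adj (hmono : StrictMono F) (hbij : Function.Bijective F)
    (hsym : ∀ x t : ℝ, 0 < t → ∀ n : ℕ, 1 ≤ n →
      1 / (1 + ε t) ≤ (Finv F n (x + t) - Finv F n x) / (Finv F n x - Finv F n (x - t)) ∧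
      (Finv F n (x + t) - Finv F n x) / (Finv F n x - Finv F n (x - t)) ≤ 1 + ε t)
    (hpos : ∀ t : ℝ, 0 < t → 0 < ε t)
    {n : ℕ} (hn : 1 ≤ n) (x t : ℝ) (ht : 0 < t) :
    Finv F n (x + t) - Finv F n x ≤ (1 + ε t) * (Finv F n x - Finv F n (x - t)) ∧
    Finv F n x - Finv F n (x - t) ≤ (1 + ε t) * (Finv F n (x + t) - Finv F n x) := by
  have hD : 0 < Finv F n x - Finv F n (x - t) := by
    have := Finv_strictMono hmono hbij n (show x - t < x by linarith)
    linarith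
  have hA : 0 < Finv F n (x + t) - Finv F n x := by
    have := Finv_strictMono hmono hbij n (show x < x + t by linarith)
    linarith
  have hε := hpos t ht
  obtain ⟨hlow, hhigh⟩ := hsym x t ht n hn
  constructor
  · rw [div_le_iff₀ hD] at hhigh
    linarith [hhigh]
  · rw [div_le_div_iff₀ (by linarith) hD] at hlow
    linarith [hlow]

lemma hfun_adj (hd : 2 ≤ d) (hmono : StrictMono F) (hbij : Function.Bijective F)
    (hsym : ∀ x t : ℝ, 0 < t → ∀ n : ℕ, 1 ≤ n →
      1 / (1 + ε t) ≤ (Finv F n (x + t) - Finv F n x) / (Finv F n x - Finv F n (x - t)) ∧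
      (Finv F n (x + t) - Finv F n x) / (Finv F n x - Finv F n (x - t)) ≤ 1 + ε t)
    (hpos : ∀ t : ℝ, 0 < t → 0 < ε t)
    (k : ℕ) (x t : ℝ) (ht : 0 < t) :
    hfun F d k (x + t) - hfun F d k x ≤ (1 + ε t) * (hfun F d k x - hfun F d k (x - t)) ∧
    hfun F d k x - hfun F d k (x - t) ≤ (1 + ε t) * (hfun F d k (x + t) - hfun F d k x) := by
  rcases Nat.eq_zero_or_pos k with hk | hk
  · subst hk
    rw [hfun_id hd, hfun_id hd, hfun_id hd]
    have hε := hpos t ht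
    constructor <;> nlinarith
  · have key : ∀ s : Finset ℕ,
        (∑ l ∈ s, (Finv F k ((l : ℝ) + (x + t)) - Finv F k (l : ℝ)))
          - (∑ l ∈ s, (Finv F k ((l : ℝ) + x) - Finv F k (l : ℝ)))
        ≤ (1 + ε t) * ((∑ l ∈ s, (Finv F k ((l : ℝ) + x) - Finv F k (l : ℝ)))
          - (∑ l ∈ s, (Finv F k ((l : ℝ) + (x - t)) - Finv F k (l : ℝ)))) ∧
        (∑ l ∈ s, (Finv F k ((l : ℝ) + x) - Finv F k (l : ℝ)))
          - (∑ l ∈ s, (Finv F k ((l : ℝ) + (x - t)) - Finv F k (l : ℝ)))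
        ≤ (1 + ε t) * ((∑ l ∈ s, (Finv F k ((l : ℝ) + (x + t)) - Finv F k (l : ℝ)))
          - (∑ l ∈ s, (Finv F k ((l : ℝ) + x) - Finv F k (l : ℝ)))) := by
      intro s
      simp only [← Finset.sum_sub_distrib, Finset.mul_sum]
      constructor <;>
      · apply Finset.sum_le_sum
        intro l _
        have h := Finv_adj hmono hbij hsym hpos hk ((l : ℝ) + x) t ht
        have e1 : (l : ℝ) + (x + t) = ((l : ℝ) + x) + t := by ring
        have e2 : (l : ℝ) + (x - t) = ((l : ℝ) + x) - t := by ring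
        rw [e1, e2]
        first
        | · have := h.1; linarith
        | · have := h.2; linarith
    have := key (Finset.range (d ^ k))
    unfold hfun
    exact this
end adj

lemma sum_range_mul_eq {M : Type*} [AddCommMonoid M] (f : ℕ → M) (a b : ℕ) (ha : 0 < a) :
    ∑ m ∈ Finset.range (a * b), f m
      = ∑ i ∈ Finset.range a, ∑ j ∈ Finset.range b, f (i + a * j) := by
  rw [← Finset.sum_product']
  apply Finset.sum_nbij' (i := fun m => ((m % a : ℕ), (m / a : ℕ)))
    (j := fun p => p.1 + a * p.2)
  · intro m hm
    rw [Finset.mem_range] at hm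
    rw [Finset.mem_product, Finset.mem_range, Finset.mem_range]
    refine ⟨Nat.mod_lt m ha, ?_⟩
    exact Nat.div_lt_of_lt_mul (by omega)
  · intro p hp
    rw [Finset.mem_product, Finset.mem_range, Finset.mem_range] at hp
    rw [Finset.mem_range]
    calc p.1 + a * p.2 < a + a * p.2 := by omega
    _ = a * (p.2 + 1) := by ring
    _ ≤ a * b := Nat.mul_le_mul_left a hp.2
  · intro m _
    simp [Nat.mod_add_div]
  · intro p hp
    rw [Finset.mem_product, Finset.mem_range, Finset.mem_range] at hp
    have h1 : (p.1 + a * p.2) % a = p.1 := by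
      rw [Nat.add_mul_mod_self_left]
      exact Nat.mod_eq_of_lt hp.1
    have h2 : (p.1 + a * p.2) / a = p.2 := by
      rw [Nat.add_mul_div_left _ _ ha, Nat.div_eq_of_lt hp.1, zero_add]
    simp [h1, h2]
  · intro m _
    simp [Nat.mod_add_div]

section comp
variable {F : ℝ → ℝ} {d : ℕ}

lemma Finv1_shift (hbij : Function.Bijective F) (hdeg : ∀ x : ℝ, F (x + 1) = F x + d)
    (y : ℝ) (j : ℕ) : Finv F 1 (y + d * j) = Finv F 1 y + j := by
  have := Finv_add_mul hbij hdeg 1 j y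
  push_cast at this
  rw [← this]
  ring_nf

lemma hfun_comp (hd : 2 ≤ d) (hbij : Function.Bijective F)
    (hdeg : ∀ x : ℝ, F (x + 1) = F x + d) (k : ℕ) (x : ℝ) :
    ∑ i ∈ Finset.range d, (hfun F d k (Finv F 1 (x + i)) - hfun F d k (Finv F 1 (i : ℝ)))
      = hfun F d (k + 1) x := by
  have ha : 0 < d := by omega
  have hrhs : hfun F d (k+1) x
      = ∑ i ∈ Finset.range d, ∑ j ∈ Finset.range (d ^ k),
          (Finv F (k+1) (((i + d * j : ℕ) : ℝ) + x) - Finv F (k+1) ((i + d * j : ℕ) : ℝ)) := by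
    unfold hfun
    rw [pow_succ, mul_comm (d^k) d]
    exact sum_range_mul_eq _ d (d ^ k) ha
  rw [hrhs]
  apply Finset.sum_congr rfl
  intro i _
  unfold hfun
  rw [← Finset.sum_sub_distrib]
  apply Finset.sum_congr rfl
  intro j _
  have e1 : Finv F (k+1) (((i + d * j : ℕ) : ℝ) + x)
      = Finv F k ((j : ℝ) + Finv F 1 (x + i)) := by
    rw [Finv_succ hbij]
    have a1 : (((i + d * j : ℕ) : ℝ) + x) = (x + i) + (d : ℝ) * j := by push_cast; ring
    rw [a1, Finv1_shift hbij hdeg]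
    congr 1; ring
  have e2 : Finv F (k+1) (((i + d * j : ℕ) : ℝ))
      = Finv F k ((j : ℝ) + Finv F 1 (i : ℝ)) := by
    rw [Finv_succ hbij]
    have a1 : (((i + d * j : ℕ) : ℝ)) = (i : ℝ) + (d : ℝ) * j := by push_cast; ring
    rw [a1, Finv1_shift hbij hdeg]
    congr 1; ring
  rw [e1, e2]
  ring
end comp

section Hlemmas
variable {F : ℝ → ℝ} {d : ℕ} {ε : ℝ → ℝ}

lemma Hseq_zero (n : ℕ) : Hseq F d n 0 = 0 := by
  rw [Hseq_eq]
  simp [hfun_zero]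

lemma Hseq_per (hbij : Function.Bijective F) (hdeg : ∀ x : ℝ, F (x + 1) = F x + d)
    {n : ℕ} (hn : 1 ≤ n) (x : ℝ) : Hseq F d n (x + 1) = Hseq F d n x + 1 := by
  rw [Hseq_eq, Hseq_eq]
  have : ∑ k ∈ Finset.range n, hfun F d k (x + 1)
      = ∑ k ∈ Finset.range n, (hfun F d k x + 1) :=
    Finset.sum_congr rfl (fun k _ => hfun_per hbij hdeg k x)
  rw [this, Finset.sum_add_distrib]
  simp only [Finset.sum_const, Finset.card_range, nsmul_eq_mul, mul_one]
  have hn' : (n : ℝ) ≠ 0 := Nat.cast_ne_zero.2 (by omega)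
  field_simp

lemma Hseq_mono (hmono : StrictMono F) (hbij : Function.Bijective F) (n : ℕ) :
    Monotone (Hseq F d n) := by
  intro x y hxy
  rw [Hseq_eq, Hseq_eq]
  apply mul_le_mul_of_nonneg_left _ (by positivity)
  exact Finset.sum_le_sum (fun k _ => hfun_mono hmono hbij k hxy)

lemma per_int {g : ℝ → ℝ} (hper : ∀ x, g (x + 1) = g x + 1) (x : ℝ) (k : ℤ) :
    g (x + k) = g x + k := by
  induction k using Int.induction_on with
  | zero => simp
  | succ k ih =>
    have : x + ((k : ℤ) + 1 : ℤ) = (x + (k : ℤ)) + 1 := by push_cast; ring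
    rw [this, hper, ih]; push_cast; ring
  | pred k ih =>
    have h := hper (x + (-(k : ℤ) - 1 : ℤ))
    have e : (x + (-(k : ℤ) - 1 : ℤ)) + 1 = x + (-(k : ℤ) : ℤ) := by push_cast; ring
    rw [e] at h
    rw [ih] at h
    have : x + (-(k : ℤ) - 1 : ℤ) = g x + (-(k:ℤ) : ℝ) - 1 → True := fun _ => trivial
    push_cast at h ⊢
    linarith

lemma Hseq_int (hbij : Function.Bijective F) (hdeg : ∀ x : ℝ, F (x + 1) = F x + d)
    {n : ℕ} (hn : 1 ≤ n) (k : ℤ) : Hseq F d n (k : ℝ) = k := by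
  have := per_int (fun x => Hseq_per hbij hdeg hn x) 0 k
  rw [zero_add, Hseq_zero, zero_add] at this
  exact this

lemma Hseq_dist (hmono : StrictMono F) (hbij : Function.Bijective F)
    (hdeg : ∀ x : ℝ, F (x + 1) = F x + d) {n : ℕ} (hn : 1 ≤ n) (x : ℝ) :
    x - 1 ≤ Hseq F d n x ∧ Hseq F d n x ≤ x + 1 := by
  have h1 : Hseq F d n (⌊x⌋ : ℝ) = (⌊x⌋ : ℝ) := Hseq_int hbij hdeg hn ⌊x⌋
  have h2 : Hseq F d n ((⌊x⌋ + 1 : ℤ) : ℝ) = ((⌊x⌋ + 1 : ℤ) : ℝ) := Hseq_int hbij hdeg hn _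
  have hfl := Int.floor_le x
  have hfu := Int.lt_floor_add_one x
  constructor
  · have := Hseq_mono hmono hbij (d := d) n hfl
    rw [h1] at this
    linarith
  · have hle : x ≤ ((⌊x⌋ + 1 : ℤ) : ℝ) := by push_cast; linarith
    have := Hseq_mono hmono hbij (d := d) n hle
    rw [h2] at this
    push_cast at this ⊢
    linarith

lemma Hseq_adj (hd : 2 ≤ d) (hmono : StrictMono F) (hbij : Function.Bijective F)
    (hsym : ∀ x t : ℝ, 0 < t → ∀ n : ℕ, 1 ≤ n →
      1 / (1 + ε t) ≤ (Finv F n (x + t) - Finv F n x) / (Finv F n x - Finv F n (x - t)) ∧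
      (Finv F n (x + t) - Finv F n x) / (Finv F n x - Finv F n (x - t)) ≤ 1 + ε t)
    (hpos : ∀ t : ℝ, 0 < t → 0 < ε t)
    (n : ℕ) (x t : ℝ) (ht : 0 < t) :
    Hseq F d n (x + t) - Hseq F d n x ≤ (1 + ε t) * (Hseq F d n x - Hseq F d n (x - t)) ∧
    Hseq F d n x - Hseq F d n (x - t) ≤ (1 + ε t) * (Hseq F d n (x + t) - Hseq F d n x) := by
  have hcoef : (0 : ℝ) ≤ 1 / (n : ℝ) := by positivity
  simp only [Hseq_eq]
  set A := ∑ k ∈ Finset.range n, hfun F d k (x + t) with hA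
  set Bs := ∑ k ∈ Finset.range n, hfun F d k x with hB
  set C := ∑ k ∈ Finset.range n, hfun F d k (x - t) with hC
  have S1 : A - Bs ≤ (1 + ε t) * (Bs - C) := by
    rw [hA, hB, hC]
    simp only [← Finset.sum_sub_distrib, Finset.mul_sum]
    exact Finset.sum_le_sum fun k _ => (hfun_adj hd hmono hbij hsym hpos k x t ht).1
  have S2 : Bs - C ≤ (1 + ε t) * (A - Bs) := by
    rw [hA, hB, hC]
    simp only [← Finset.sum_sub_distrib, Finset.mul_sum]
    exact Finset.sum_le_sum fun k _ => (hfun_adj hd hmono hbij hsym hpos k x t ht).2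
  constructor
  · calc 1/(n:ℝ) * A - 1/(n:ℝ) * Bs = 1/(n:ℝ) * (A - Bs) := by ring
    _ ≤ 1/(n:ℝ) * ((1 + ε t) * (Bs - C)) := mul_le_mul_of_nonneg_left S1 hcoef
    _ = (1 + ε t) * (1/(n:ℝ) * Bs - 1/(n:ℝ) * C) := by ring
  · calc 1/(n:ℝ) * Bs - 1/(n:ℝ) * C = 1/(n:ℝ) * (Bs - C) := by ring
    _ ≤ 1/(n:ℝ) * ((1 + ε t) * (A - Bs)) := mul_le_mul_of_nonneg_left S2 hcoef
    _ = (1 + ε t) * (1/(n:ℝ) * A - 1/(n:ℝ) * Bs) := by ring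

end Hlemmas

section inv
variable {F : ℝ → ℝ} {d : ℕ}

lemma Hseq_invariance (hd : 2 ≤ d) (hbij : Function.Bijective F)
    (hdeg : ∀ x : ℝ, F (x + 1) = F x + d) {n : ℕ} (hn : 1 ≤ n) (x : ℝ) :
    ∑ i ∈ Finset.range d,
        (Hseq F d n (Finv F 1 (x + (i : ℝ))) - Hseq F d n (Finv F 1 (i : ℝ)))
      = Hseq F d n x + (hfun F d n x - x) / n := by
  have key : ∑ i ∈ Finset.range d,
      (∑ k ∈ Finset.range n, hfun F d k (Finv F 1 (x + (i : ℝ)))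
        - ∑ k ∈ Finset.range n, hfun F d k (Finv F 1 (i : ℝ)))
      = ∑ k ∈ Finset.range n, hfun F d (k + 1) x := by
    have swap : ∑ i ∈ Finset.range d, ∑ k ∈ Finset.range n,
        (hfun F d k (Finv F 1 (x + (i : ℝ))) - hfun F d k (Finv F 1 (i : ℝ)))
        = ∑ k ∈ Finset.range n, ∑ i ∈ Finset.range d,
        (hfun F d k (Finv F 1 (x + (i : ℝ))) - hfun F d k (Finv F 1 (i : ℝ))) :=
      Finset.sum_comm
    simp only [← Finset.sum_sub_distrib]
    rw [swap]
    exact Finset.sum_congr rfl fun k _ => hfun_comp hd hbij hdeg k x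
  have shift : ∑ k ∈ Finset.range n, hfun F d (k + 1) x
      = ∑ k ∈ Finset.range n, hfun F d k x - hfun F d 0 x + hfun F d n x := by
    have h1 : ∑ k ∈ Finset.range (n + 1), hfun F d k x
        = ∑ k ∈ Finset.range n, hfun F d (k + 1) x + hfun F d 0 x :=
      Finset.sum_range_succ' (fun k => hfun F d k x) n
    have h2 : ∑ k ∈ Finset.range (n + 1), hfun F d k x
        = ∑ k ∈ Finset.range n, hfun F d k x + hfun F d n x :=
      Finset.sum_range_succ (fun k => hfun F d k x) n
    linarith
  simp only [Hseq_eq]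
  have hn' : (n : ℝ) ≠ 0 := Nat.cast_ne_zero.2 (by omega)
  have lhs_eq : ∑ i ∈ Finset.range d,
      (1 / (n:ℝ) * ∑ k ∈ Finset.range n, hfun F d k (Finv F 1 (x + (i : ℝ)))
        - 1 / (n:ℝ) * ∑ k ∈ Finset.range n, hfun F d k (Finv F 1 (i : ℝ)))
      = 1 / (n:ℝ) * ∑ i ∈ Finset.range d,
      (∑ k ∈ Finset.range n, hfun F d k (Finv F 1 (x + (i : ℝ)))
        - ∑ k ∈ Finset.range n, hfun F d k (Finv F 1 (i : ℝ))) := by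
    rw [Finset.mul_sum]
    exact Finset.sum_congr rfl fun i _ => by ring
  rw [lhs_eq, key, shift, hfun_id hd]
  field_simp
  ring
end inv

section dyadic
variable {F : ℝ → ℝ} {d : ℕ} {M : ℝ}

/-- Abstract adjacency hypothesis for the Cesàro averages. -/
def AdjM (F : ℝ → ℝ) (d : ℕ) (M : ℝ) : Prop :=
  ∀ n : ℕ, ∀ x t : ℝ, 0 < t →
    Hseq F d n (x + t) - Hseq F d n x ≤ M * (Hseq F d n x - Hseq F d n (x - t)) ∧
    Hseq F d n x - Hseq F d n (x - t) ≤ M * (Hseq F d n (x + t) - Hseq F d n x)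

lemma Hseq_dyadic (hmono : StrictMono F) (hbij : Function.Bijective F)
    (hdeg : ∀ x : ℝ, F (x + 1) = F x + d)
    (hM : 1 ≤ M) (hadj : AdjM F d M) {n : ℕ} (hn : 1 ≤ n) :
    ∀ m : ℕ, ∀ x : ℝ,
      Hseq F d n (x + (1/2) ^ m) - Hseq F d n x ≤ (M / (1 + M)) ^ m ∧
      (1 / (1 + M)) ^ m ≤ Hseq F d n (x + (1/2) ^ m) - Hseq F d n x := by
  intro m
  induction m with
  | zero =>
    intro x
    simp only [pow_zero]
    rw [Hseq_per hbij hdeg hn x]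
    constructor <;> linarith
  | succ m ih =>
    intro x
    have hMpos : (0 : ℝ) < 1 + M := by linarith
    set t : ℝ := (1/2) ^ (m + 1) with htdef
    have ht : (0 : ℝ) < t := by positivity
    have hsum : x + t + t = x + (1/2) ^ m := by
      rw [htdef, pow_succ]; ring
    set a := Hseq F d n (x + t) - Hseq F d n x with ha
    set b := Hseq F d n (x + t + t) - Hseq F d n (x + t) with hb
    have hadj' := hadj n (x + t) t ht
    have hxx : x + t - t = x := by ring
    rw [hxx] at hadj'
    have hba : b ≤ M * a := hadj'.1
    have hab : a ≤ M * b := hadj'.2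
    have hIH := ih x
    have hab_sum : a + b = Hseq F d n (x + (1/2) ^ m) - Hseq F d n x := by
      rw [ha, hb, hsum]; ring
    have ha_nonneg : 0 ≤ a := by
      rw [ha]
      have := Hseq_mono hmono hbij (d := d) n (by linarith : x ≤ x + t)
      linarith
    constructor
    · have h1 : a ≤ M / (1 + M) * (a + b) := by
        rw [div_mul_eq_mul_div, le_div_iff₀ hMpos]
        nlinarith
      calc Hseq F d n (x + t) - Hseq F d n x = a := rfl
      _ ≤ M / (1 + M) * (a + b) := h1
      _ ≤ M / (1 + M) * (M / (1 + M)) ^ m := by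
          apply mul_le_mul_of_nonneg_left _ (by positivity)
          rw [hab_sum]; exact hIH.1
      _ = (M / (1 + M)) ^ (m + 1) := by rw [pow_succ]; ring
    · have h1 : 1 / (1 + M) * (a + b) ≤ a := by
        rw [div_mul_eq_mul_div, div_le_iff₀ hMpos]
        nlinarith
      calc (1 / (1 + M)) ^ (m + 1) = 1 / (1 + M) * (1 / (1 + M)) ^ m := by rw [pow_succ]; ring
      _ ≤ 1 / (1 + M) * (a + b) := by
          apply mul_le_mul_of_nonneg_left _ (by positivity)
          rw [hab_sum]; exact hIH.2
      _ ≤ a := h1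

lemma Hseq_modulus (hmono : StrictMono F) (hbij : Function.Bijective F)
    (hdeg : ∀ x : ℝ, F (x + 1) = F x + d)
    (hM : 1 ≤ M) (hadj : AdjM F d M) {n : ℕ} (hn : 1 ≤ n)
    (m : ℕ) {x y : ℝ} (hxy : |x - y| ≤ (1/2) ^ m) :
    |Hseq F d n x - Hseq F d n y| ≤ (M / (1 + M)) ^ m := by
  have main : ∀ u v : ℝ, u ≤ v → v - u ≤ (1/2) ^ m →
      Hseq F d n v - Hseq F d n u ≤ (M / (1 + M)) ^ m := by
    intro u v huv hd2
    have h1 : Hseq F d n v ≤ Hseq F d n (u + (1/2) ^ m) :=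
      Hseq_mono hmono hbij n (by linarith)
    have h2 := (Hseq_dyadic hmono hbij hdeg hM hadj hn m u).1
    linarith
  rcases le_total x y with h | h
  · have h0 : 0 ≤ Hseq F d n y - Hseq F d n x := by
      have := Hseq_mono hmono hbij (d := d) n h
      linarith
    rw [abs_sub_comm, abs_of_nonneg h0]
    exact main x y h (by rw [abs_sub_comm] at hxy; exact (abs_le.1 hxy).2 |>.trans_eq rfl)
  · have h0 : 0 ≤ Hseq F d n x - Hseq F d n y := by
      have := Hseq_mono hmono hbij (d := d) n h
      linarith
    rw [abs_of_nonneg h0]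
    exact main y x h ((abs_le.1 hxy).2)
end dyadic

section limitprops
variable {F : ℝ → ℝ} {d : ℕ}

lemma adjM_of_unifSymm {ε : ℝ → ℝ} {B : ℝ} (hd : 2 ≤ d)
    (hmono : StrictMono F) (hbij : Function.Bijective F)
    (hpos : ∀ t : ℝ, 0 < t → 0 < ε t) (hB : ∀ t : ℝ, 0 < t → ε t ≤ B)
    (hsym : ∀ x t : ℝ, 0 < t → ∀ n : ℕ, 1 ≤ n →
      1 / (1 + ε t) ≤ (Finv F n (x + t) - Finv F n x) / (Finv F n x - Finv F n (x - t)) ∧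
      (Finv F n (x + t) - Finv F n x) / (Finv F n x - Finv F n (x - t)) ≤ 1 + ε t) :
    AdjM F d (1 + B) := by
  intro n x t ht
  have h := Hseq_adj hd hmono hbij hsym hpos n x t ht
  have h1 : 0 ≤ Hseq F d n x - Hseq F d n (x - t) := by
    have := Hseq_mono hmono hbij (d := d) n (by linarith : x - t ≤ x)
    linarith
  have h2 : 0 ≤ Hseq F d n (x + t) - Hseq F d n x := by
    have := Hseq_mono hmono hbij (d := d) n (by linarith : x ≤ x + t)
    linarith
  have hεB : ε t ≤ B := hB t ht
  constructor
  · calc Hseq F d n (x + t) - Hseq F d n x ≤ (1 + ε t) * (Hseq F d n x - Hseq F d n (x - t)) := h.1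
    _ ≤ (1 + B) * (Hseq F d n x - Hseq F d n (x - t)) := by nlinarith
  · calc Hseq F d n x - Hseq F d n (x - t) ≤ (1 + ε t) * (Hseq F d n (x + t) - Hseq F d n x) := h.2
    _ ≤ (1 + B) * (Hseq F d n (x + t) - Hseq F d n x) := by nlinarith

lemma limit_props (hd : 2 ≤ d)
    (hmono : StrictMono F) (hbij : Function.Bijective F)
    (hdeg : ∀ x : ℝ, F (x + 1) = F x + d) (hF0 : F 0 = 0)
    (husym : UnifSymm F) (φ : ℕ → ℕ) (H : ℝ → ℝ) (hφ : StrictMono φ)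
    (hpt : ∀ x : ℝ, Tendsto (fun i => Hseq F d (φ i) x) atTop (nhds (H x))) :
    StrictMono H ∧ Function.Bijective H ∧ H 0 = 0 ∧
      (∀ x : ℝ, H (x + 1) = H x + 1) ∧ SymmHomeo H ∧
      ∀ x ∈ Set.Icc (0:ℝ) 1,
        ∑ i ∈ Finset.range d,
          (H (Finv F 1 (x + (i : ℝ))) - H (Finv F 1 (i : ℝ))) = H x := by
  obtain ⟨ε, hpos, ⟨B, hB⟩, htend, hsym⟩ := husym
  set M : ℝ := 1 + B with hMdef
  have hBpos : 0 < B := lt_of_lt_of_le (hpos 1 one_pos) (hB 1 one_pos)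
  have hM : 1 ≤ M := by rw [hMdef]; linarith
  have hMpos : (0:ℝ) < 1 + M := by linarith
  have hadj : AdjM F d M := adjM_of_unifSymm hd hmono hbij hpos hB hsym
  have ev1 : ∀ᶠ i in atTop, 1 ≤ φ i :=
    eventually_atTop.2 ⟨1, fun i hi => le_trans hi (hφ.le_apply)⟩
  -- H 0 = 0
  have h0 : H 0 = 0 := by
    have : Tendsto (fun i => Hseq F d (φ i) 0) atTop (nhds 0) := by
      have : (fun i => Hseq F d (φ i) 0) = fun _ => (0:ℝ) := funext fun i => Hseq_zero _
      rw [this]; exact tendsto_const_nhds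
    exact tendsto_nhds_unique (hpt 0) this
  -- periodicity
  have hper : ∀ x : ℝ, H (x + 1) = H x + 1 := by
    intro x
    have t1 : Tendsto (fun i => Hseq F d (φ i) (x + 1)) atTop (nhds (H x + 1)) := by
      apply Tendsto.congr' _ ((hpt x).add_const 1)
      filter_upwards [ev1] with i hi
      exact (Hseq_per hbij hdeg hi x).symm
    exact tendsto_nhds_unique (hpt (x + 1)) t1
  -- monotone
  have hmonoH : Monotone H := by
    intro x y hxy
    exact le_of_tendsto_of_tendsto' (hpt x) (hpt y)
      (fun i => Hseq_mono hmono hbij (φ i) hxy)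
  -- dyadic lower bound for H
  have hlow : ∀ (m : ℕ) (x : ℝ), (1 / (1 + M)) ^ m ≤ H (x + (1/2) ^ m) - H x := by
    intro m x
    apply ge_of_tendsto ((hpt (x + (1/2) ^ m)).sub (hpt x))
    filter_upwards [ev1] with i hi
    exact (Hseq_dyadic hmono hbij hdeg hM hadj hi m x).2
  -- strict monotone
  have hstrict : StrictMono H := by
    intro x y hxy
    obtain ⟨m, hm⟩ := exists_pow_lt_of_lt_one (by linarith : (0:ℝ) < y - x)
      (by norm_num : (1/2 : ℝ) < 1)
    have h1 : H (x + (1/2) ^ m) ≤ H y := hmonoH (by linarith)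
    have h2 := hlow m x
    have h3 : (0:ℝ) < (1 / (1 + M)) ^ m := by positivity
    linarith
  -- modulus for H
  have hmod : ∀ (m : ℕ) (x y : ℝ), |x - y| ≤ (1/2) ^ m →
      |H x - H y| ≤ (M / (1 + M)) ^ m := by
    intro m x y hxy
    apply le_of_tendsto (((hpt x).sub (hpt y)).abs)
    filter_upwards [ev1] with i hi
    exact Hseq_modulus hmono hbij hdeg hM hadj hi m hxy
  -- continuity
  have hρ : M / (1 + M) < 1 := (div_lt_one hMpos).2 (by linarith)
  have hρ0 : 0 < M / (1 + M) := by positivity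
  have hcont : Continuous H := by
    rw [Metric.continuous_iff]
    intro b e he
    obtain ⟨m, hm⟩ := exists_pow_lt_of_lt_one he hρ
    refine ⟨(1/2) ^ m, by positivity, fun a hab => ?_⟩
    rw [Real.dist_eq] at hab ⊢
    exact lt_of_le_of_lt (hmod m a b (le_of_lt hab)) hm
  -- surjectivity
  have hint : ∀ k : ℤ, H (k : ℝ) = k := by
    intro k
    have := per_int hper 0 k
    rw [zero_add, h0, zero_add] at this
    exact this
  have hsurj : Function.Surjective H := by
    intro y
    have ha : H (⌊y⌋ : ℝ) ≤ y := by rw [hint]; exact_mod_cast Int.floor_le y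
    have hb : y ≤ H (⌈y⌉ : ℝ) := by rw [hint]; exact_mod_cast Int.le_ceil y
    have hab : ((⌊y⌋ : ℤ) : ℝ) ≤ ((⌈y⌉ : ℤ) : ℝ) := by
      exact_mod_cast Int.floor_le_ceil y
    have := intermediate_value_Icc hab hcont.continuousOn
    obtain ⟨x, _, hx⟩ := this ⟨ha, hb⟩
    exact ⟨x, hx⟩
  -- symmetry
  have hsymH : SymmHomeo H := by
    refine ⟨ε, hpos, ⟨B, hB⟩, htend, fun x t ht => ?_⟩
    have hnum : 0 < H (x + t) - H x := by
      have := hstrict (show x < x + t by linarith); linarith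
    have hden : 0 < H x - H (x - t) := by
      have := hstrict (show x - t < x by linarith); linarith
    have hεt : 0 < ε t := hpos t ht
    have i1 : H (x + t) - H x ≤ (1 + ε t) * (H x - H (x - t)) := by
      apply le_of_tendsto_of_tendsto' ((hpt (x + t)).sub (hpt x))
        (((hpt x).sub (hpt (x - t))).const_mul (1 + ε t))
      intro i
      exact (Hseq_adj hd hmono hbij hsym hpos (φ i) x t ht).1
    have i2 : H x - H (x - t) ≤ (1 + ε t) * (H (x + t) - H x) := by
      apply le_of_tendsto_of_tendsto' (((hpt x).sub (hpt (x - t))))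
        (((hpt (x + t)).sub (hpt x)).const_mul (1 + ε t))
      intro i
      exact (Hseq_adj hd hmono hbij hsym hpos (φ i) x t ht).2
    constructor
    · rw [div_le_div_iff₀ (by linarith) hden]
      linarith
    · rw [div_le_iff₀ hden]
      exact i1
  -- invariance
  have hinv : ∀ x ∈ Set.Icc (0:ℝ) 1,
      ∑ i ∈ Finset.range d,
        (H (Finv F 1 (x + (i : ℝ))) - H (Finv F 1 (i : ℝ))) = H x := by
    intro x hx
    have t1 : Tendsto (fun i => ∑ j ∈ Finset.range d,
        (Hseq F d (φ i) (Finv F 1 (x + (j : ℝ))) - Hseq F d (φ i) (Finv F 1 (j : ℝ))))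
        atTop (nhds (∑ j ∈ Finset.range d,
        (H (Finv F 1 (x + (j : ℝ))) - H (Finv F 1 (j : ℝ))))) := by
      apply tendsto_finset_sum
      intro j _
      exact (hpt _).sub (hpt _)
    have herr : Tendsto (fun i => (hfun F d (φ i) x - x) / (φ i : ℝ)) atTop (nhds 0) := by
      refine squeeze_zero_norm' ?_ (tendsto_one_div_atTop_nhds_zero_nat)
      · filter_upwards [eventually_atTop.2 ⟨1, fun i (hi : 1 ≤ i) => hi⟩] with i hi
        have hφi : 1 ≤ φ i := le_trans hi hφ.le_apply
        have hmem := hfun_mem hmono hbij hdeg (φ i) hx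
        have hb1 : |hfun F d (φ i) x - x| ≤ 1 := by
          obtain ⟨a1, a2⟩ := hmem
          obtain ⟨b1, b2⟩ := hx
          rw [abs_le]; constructor <;> linarith
        have hφpos : (0:ℝ) < (φ i : ℝ) := by exact_mod_cast hφi
        have hii : (i : ℝ) ≤ (φ i : ℝ) := by exact_mod_cast hφ.le_apply
        have hipos : (0:ℝ) < (i:ℝ) := by exact_mod_cast hi
        rw [Real.norm_eq_abs, abs_div, abs_of_nonneg (le_of_lt hφpos)]
        rw [div_le_div_iff₀ hφpos hipos]
        exact mul_le_mul hb1 hii (le_of_lt hipos) zero_le_one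
    have t2 : Tendsto (fun i => ∑ j ∈ Finset.range d,
        (Hseq F d (φ i) (Finv F 1 (x + (j : ℝ))) - Hseq F d (φ i) (Finv F 1 (j : ℝ))))
        atTop (nhds (H x + 0)) := by
      apply Tendsto.congr' _ ((hpt x).add herr)
      filter_upwards [ev1] with i hi
      exact (Hseq_invariance hd hbij hdeg hi x).symm
    rw [add_zero] at t2
    exact tendsto_nhds_unique t1 t2
  exact ⟨hstrict, ⟨hstrict.injective, hsurj⟩, h0, hper, hsymH, hinv⟩
end limitprops

lemma abs_sub_le₃ (a b c d : ℝ) : |a - d| ≤ |a - b| + |b - c| + |c - d| := by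
  calc |a - d| ≤ |a - c| + |c - d| := abs_sub_le a c d
  _ ≤ (|a - b| + |b - c|) + |c - d| := by linarith [abs_sub_le a b c]

section extract
variable {F : ℝ → ℝ} {d : ℕ}

lemma exists_subseq (hd : 2 ≤ d)
    (hmono : StrictMono F) (hbij : Function.Bijective F)
    (hdeg : ∀ x : ℝ, F (x + 1) = F x + d) (hF0 : F 0 = 0)
    (husym : UnifSymm F) :
    ∃ (φ : ℕ → ℕ) (H : ℝ → ℝ), StrictMono φ ∧
      TendstoUniformly (fun i => Hseq F d (φ i)) H atTop := by
  obtain ⟨ε, hpos, ⟨B, hB⟩, htend, hsym⟩ := husym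
  set M : ℝ := 1 + B with hMdef
  have hBpos : 0 < B := lt_of_lt_of_le (hpos 1 one_pos) (hB 1 one_pos)
  have hM : 1 ≤ M := by rw [hMdef]; linarith
  have hMpos : (0:ℝ) < 1 + M := by linarith
  have hadj : AdjM F d M := adjM_of_unifSymm hd hmono hbij hpos hB hsym
  set ρ : ℝ := M / (1 + M) with hρdef
  have hρ : ρ < 1 := (div_lt_one hMpos).2 (by linarith)
  have hρ0 : 0 < ρ := by rw [hρdef]; positivity
  -- the sequence in the compact product space
  set u : ℕ → (∀ q : ℚ, Set.Icc ((q:ℝ) - 1) ((q:ℝ) + 1)) := fun n q =>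
    ⟨Hseq F d (n + 1) (q : ℝ), by
      have := Hseq_dist hmono hbij hdeg (n := n + 1) (by omega) (q : ℝ)
      exact Set.mem_Icc.2 ⟨by linarith [this.1], by linarith [this.2]⟩⟩ with hu
  obtain ⟨L, ψ, hψ, hconv⟩ := CompactSpace.tendsto_subseq u
  set φ : ℕ → ℕ := fun i => ψ i + 1 with hφdef
  have hφ : StrictMono φ := fun a b hab => by
    simp only [hφdef]; exact Nat.add_lt_add_right (hψ hab) 1
  have hφ1 : ∀ i, 1 ≤ φ i := fun i => by simp [hφdef]
  -- pointwise convergence at rationals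
  have hq : ∀ q : ℚ, Tendsto (fun i => Hseq F d (φ i) (q : ℝ)) atTop (nhds ((L q : ℝ))) := by
    intro q
    have h1 : Tendsto (fun i => (u ∘ ψ) i q) atTop (nhds (L q)) :=
      ((continuous_apply q).tendsto L).comp hconv
    exact (continuous_subtype_val.tendsto (L q)).comp h1
  -- pointwise Cauchy everywhere
  have hcauchy : ∀ x : ℝ, CauchySeq (fun i => Hseq F d (φ i) x) := by
    intro x
    rw [Metric.cauchySeq_iff]
    intro e he
    obtain ⟨m, hm⟩ := exists_pow_lt_of_lt_one (show (0:ℝ) < e/3 by linarith) hρ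
    obtain ⟨q, hq'⟩ := exists_rat_near x (show (0:ℝ) < (1/2) ^ m by positivity)
    obtain ⟨N, hN⟩ := Metric.cauchySeq_iff.1 ((hq q).cauchySeq) (e/3) (by linarith)
    refine ⟨N, fun i hi j hj => ?_⟩
    have d1 : |Hseq F d (φ i) x - Hseq F d (φ i) (q:ℝ)| ≤ ρ ^ m :=
      Hseq_modulus hmono hbij hdeg hM hadj (hφ1 i) m (le_of_lt hq')
    have d2 : |Hseq F d (φ j) x - Hseq F d (φ j) (q:ℝ)| ≤ ρ ^ m :=
      Hseq_modulus hmono hbij hdeg hM hadj (hφ1 j) m (le_of_lt hq')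
    have d3 := hN i hi j hj
    rw [Real.dist_eq] at d3 ⊢
    have : |Hseq F d (φ i) x - Hseq F d (φ j) x|
        ≤ |Hseq F d (φ i) x - Hseq F d (φ i) (q:ℝ)|
          + |Hseq F d (φ i) (q:ℝ) - Hseq F d (φ j) (q:ℝ)|
          + |Hseq F d (φ j) (q:ℝ) - Hseq F d (φ j) x| := abs_sub_le₃ _ _ _ _
    rw [abs_sub_comm (Hseq F d (φ j) (q:ℝ))] at this
    linarith [this, d1, d2, d3, hm]
  have hHex : ∀ x : ℝ, ∃ c : ℝ, Tendsto (fun i => Hseq F d (φ i) x) atTop (nhds c) :=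
    fun x => cauchySeq_tendsto_of_complete (hcauchy x)
  choose H hH using hHex
  -- modulus for H
  have hmodH : ∀ (m : ℕ) (a b : ℝ), |a - b| ≤ (1/2) ^ m → |H a - H b| ≤ ρ ^ m := by
    intro m a b hab
    apply le_of_tendsto (((hH a).sub (hH b)).abs)
    exact Eventually.of_forall fun i =>
      Hseq_modulus hmono hbij hdeg hM hadj (hφ1 i) m hab
  -- periodicity of H by integers
  have hHint : ∀ (y : ℝ) (k : ℤ), H (y + k) = H y + k := by
    intro y k
    have t1 : Tendsto (fun i => Hseq F d (φ i) (y + k)) atTop (nhds (H y + k)) := by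
      apply Tendsto.congr _ ((hH y).add_const (k:ℝ))
      intro i
      exact (per_int (fun z => Hseq_per hbij hdeg (hφ1 i) z) y k).symm
    exact tendsto_nhds_unique (hH (y + k)) t1
  refine ⟨φ, H, hφ, ?_⟩
  rw [Metric.tendstoUniformly_iff]
  intro e he
  obtain ⟨m, hm⟩ := exists_pow_lt_of_lt_one (show (0:ℝ) < e/4 by linarith) hρ
  -- grid points
  have hgrid : ∀ᶠ i in atTop, ∀ j ∈ Finset.range (2 ^ m + 1),
      dist (H (((j : ℚ) / 2 ^ m : ℚ) : ℝ)) (Hseq F d (φ i) (((j : ℚ) / 2 ^ m : ℚ) : ℝ)) < e/4 := by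
    rw [Finset.eventually_all]
    intro j _
    have := hH (((j : ℚ) / 2 ^ m : ℚ) : ℝ)
    have := (Metric.tendsto_atTop.1 this) (e/4) (by linarith)
    obtain ⟨N, hN⟩ := this
    filter_upwards [eventually_ge_atTop N] with i hi
    rw [dist_comm]
    exact hN i hi
  filter_upwards [hgrid] with i hgi
  intro x
  set y : ℝ := Int.fract x with hy
  have hy0 : 0 ≤ y := Int.fract_nonneg x
  have hy1 : y < 1 := Int.fract_lt_one x
  have hxy : x = y + (⌊x⌋ : ℤ) := by
    rw [hy]; push_cast; linarith [Int.floor_add_fract x]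
  have hHsplit : H x = H y + (⌊x⌋ : ℝ) := by
    have h := hHint y ⌊x⌋
    rw [← hxy] at h
    exact h
  have hGsplit : Hseq F d (φ i) x = Hseq F d (φ i) y + (⌊x⌋ : ℝ) := by
    have h := per_int (fun z => Hseq_per hbij hdeg (hφ1 i) z) y ⌊x⌋
    rw [← hxy] at h
    exact h
  -- nearest grid point
  set j : ℕ := ⌊y * 2 ^ m⌋.toNat with hj
  have h1 : (0:ℤ) ≤ ⌊y * 2 ^ m⌋ := Int.floor_nonneg.2 (by positivity)
  have hc : ((j : ℕ) : ℝ) = ((⌊y * 2 ^ m⌋ : ℤ) : ℝ) := by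
    rw [hj]
    exact_mod_cast congrArg (Int.cast : ℤ → ℝ) (Int.toNat_of_nonneg h1)
  have hjy : (j : ℝ) ≤ y * 2 ^ m := by
    rw [hc]; exact Int.floor_le _
  have hjy2 : y * 2 ^ m < (j : ℝ) + 1 := by
    rw [hc]; exact Int.lt_floor_add_one _
  have hjmem : j ∈ Finset.range (2 ^ m + 1) := by
    rw [Finset.mem_range]
    have : (j : ℝ) < 2 ^ m := by
      calc (j:ℝ) ≤ y * 2^m := hjy
      _ < 1 * 2^m := by
          apply mul_lt_mul_of_pos_right hy1 (by positivity)
      _ = 2^m := by ring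
    have : (j : ℝ) < ((2^m : ℕ) : ℝ) := by push_cast; exact this
    exact_mod_cast Nat.lt_add_one_of_lt (by exact_mod_cast this)
  set q : ℚ := (j : ℚ) / 2 ^ m with hqdef
  have hqy : |y - (q : ℝ)| ≤ (1/2) ^ m := by
    have hqr : (q : ℝ) = (j : ℝ) / 2 ^ m := by rw [hqdef]; push_cast; ring
    have h2m : (0:ℝ) < 2 ^ m := by positivity
    have hhalf : ((1:ℝ)/2) ^ m = 1 / 2 ^ m := by rw [div_pow]; norm_num
    have hge : (j:ℝ)/2^m ≤ y := by rw [div_le_iff₀ h2m]; linarith [hjy]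
    have hlt : y ≤ ((j:ℝ)+1)/2^m := by rw [le_div_iff₀ h2m]; nlinarith [hjy2]
    have hdiff : ((j:ℝ)+1)/2^m - (j:ℝ)/2^m = 1/2^m := by field_simp; ring
    have hp : (0:ℝ) < (1/2)^m := by positivity
    rw [hqr, abs_le, hhalf]
    constructor
    · rw [← hhalf]; linarith [hge, hp]
    · linarith [hlt, hdiff]
  have hd1 : |H y - H (q:ℝ)| ≤ ρ ^ m := hmodH m y (q:ℝ) hqy
  have hd2 : |Hseq F d (φ i) (q:ℝ) - Hseq F d (φ i) y| ≤ ρ ^ m :=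
    Hseq_modulus hmono hbij hdeg hM hadj (hφ1 i) m (by rwa [abs_sub_comm])
  have hd3 := hgi j hjmem
  rw [Real.dist_eq] at hd3 ⊢
  rw [hHsplit, hGsplit]
  have htri : |H y + (⌊x⌋:ℝ) - (Hseq F d (φ i) y + (⌊x⌋:ℝ))| = |H y - Hseq F d (φ i) y| := by
    congr 1; ring
  rw [htri]
  have : |H y - Hseq F d (φ i) y|
      ≤ |H y - H (q:ℝ)| + |H (q:ℝ) - Hseq F d (φ i) (q:ℝ)|
        + |Hseq F d (φ i) (q:ℝ) - Hseq F d (φ i) y| := abs_sub_le₃ _ _ _ _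
  linarith [this, hd1, hd2, hd3, hm]
end extract

/-- the Cesàro averages `Hₙ` have a uniformly convergent
subsequence, and every subsequential uniform limit is a symmetric circle
homeomorphism fixing `0` which is the distribution function of an
`F`-invariant measure. -/
theorem stmt_17 (d : ℕ) (hd : 2 ≤ d) (F : ℝ → ℝ)
    (hmono : StrictMono F) (hbij : Function.Bijective F)
    (hdeg : ∀ x : ℝ, F (x + 1) = F x + d) (hF0 : F 0 = 0)
    (husym : UnifSymm F) :
    (∃ (φ : ℕ → ℕ) (H : ℝ → ℝ), StrictMono φ ∧
      TendstoUniformly (fun i => Hseq F d (φ i)) H atTop) ∧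
    (∀ (φ : ℕ → ℕ) (H : ℝ → ℝ), StrictMono φ →
      TendstoUniformly (fun i => Hseq F d (φ i)) H atTop →
      StrictMono H ∧ Function.Bijective H ∧ H 0 = 0 ∧
        (∀ x : ℝ, H (x + 1) = H x + 1) ∧ SymmHomeo H ∧
        ∀ x ∈ Set.Icc (0:ℝ) 1,
          ∑ i ∈ Finset.range d,
            (H (Finv F 1 (x + (i : ℝ))) - H (Finv F 1 (i : ℝ))) = H x) := by
  constructor
  · exact exists_subseq hd hmono hbij hdeg hF0 husym
  · intro φ H hφ hu
    exact limit_props hd hmono hbij hdeg hF0 husym φ H hφ (fun x => hu.tendsto_at x)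
end
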